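/- Define T(n,k) by T(n,0)=T(n,n)=1 and T(n,k)=2T(n-1,k-1)+T(n-1,k) for 0<k<n. Then for all 1 ≤ k ≤ n, T(n,k-1) + T(n,k) = 2^k · C(n,k). -/

import Mathlib

/-- Sloane's A119258: `T n 0 = T n n = 1` and `T n k = 2 T (n-1) (k-1) + T (n-1) k`
for `0 < k < n`, with `T n k = 0` for `k > n`. -/
def T : ℕ → ℕ → ℤ
  | _, 0 => 1
  | 0, _ + 1 => 0
  | n + 1, k + 1 =>
    if n + 1 ≤ k + 1 then (if k + 1 = n + 1 then 1 else 0)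
    else 2 * T n k + T n (k + 1)

/-! Coefficientwise, the identity says `(1 + x) Pₙ(x) = (1 + 2x)ⁿ + xⁿ⁺¹` for the row polynomial
`Pₙ` of `T`. The sums `T n j + T n (j + 1)` satisfy the Pascal-type recurrence
`f (n+1) (j+1) = 2 f n j + f n (j+1)` of `T` itself, as does `2 ^ (j + 1) * C(n, j + 1)`; so an
induction on `n` reduces everything to the two boundary entries `T (n+1) 1 = 2n + 1` and
`T (n+1) n = 2ⁿ⁺¹ - 1`, each of which follows by its own induction. -/

lemma T_zero_right (n : ℕ) : T n 0 = 1 := by cases n <;> rfl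

lemma T_self (n : ℕ) : T n n = 1 := by
  cases n <;> simp [T]

lemma T_succ_succ {n k : ℕ} (h : k < n) :
    T (n + 1) (k + 1) = 2 * T n k + T n (k + 1) := by
  rw [T, if_neg (by omega)]

lemma T_succ_one_right (n : ℕ) : T (n + 1) 1 = 2 * n + 1 := by
  induction n with
  | zero => rfl
  | succ n ih =>
    rw [T_succ_succ (by omega), T_zero_right, ih]
    push_cast
    ring

lemma T_succ_self_right (n : ℕ) : T (n + 1) n = 2 ^ (n + 1) - 1 := by
  induction n with
  | zero => rfl
  | succ n ih =>
    rw [T_succ_succ (by omega), ih, T_self]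
    ring

lemma T_add_T_succ {n j : ℕ} (h : j < n) :
    T n j + T n (j + 1) = 2 ^ (j + 1) * (n.choose (j + 1) : ℤ) := by
  induction n generalizing j with
  | zero => omega
  | succ n ih =>
    obtain rfl | hjn := eq_or_lt_of_le (Nat.le_of_lt_succ h)
    · rw [T_succ_self_right, T_self, Nat.choose_self]
      ring
    rcases j with _ | i
    · rw [T_zero_right, T_succ_one_right, Nat.choose_one_right]
      push_cast
      ring
    · rw [T_succ_succ (by omega), T_succ_succ hjn, Nat.choose_succ_succ', Nat.cast_add]
      linear_combination 2 * ih (j := i) (by omega) + ih hjn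

theorem stmt3 (n k : ℕ) (h1 : 1 ≤ k) (h2 : k ≤ n) :
    T n (k - 1) + T n k = 2 ^ k * (n.choose k : ℤ) := by
  obtain ⟨j, rfl⟩ := Nat.exists_eq_add_of_le' h1
  exact T_add_T_succ (by omega)
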